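/- Let p be a strictly positive N×M matrix of prices, q a quantity matrix, ρ a nonzero real number, and let w_{ij} = p_{ij} q_{ij} / Σ_{n=1}^N p_{nj} q_{nj} denote expenditure shares and w*_{ij} = w_{ij} / Σ_{m=1}^M w_{im}. Consider the generalized expenditure-share system: PPP_j = (Σ_{n=1}^N w_{nj} (p_{nj}/P_n)^ρ)^{1/ρ} for j = 1,…,M and P_i = (Σ_{m=1}^M w*_{im} (p_{im}/PPP_m)^ρ)^{1/ρ} for i = 1,…,N (which gives the arithmetic index for ρ = 1 and the IDB system for ρ = −1). Then a strictly positive solution (PPP, P), unique up to the rescaling (PPP, P) ↦ (γ·PPP, (1/γ)·P) for γ > 0, exists if and only if the quantity matrix q is connected. -/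

import Mathlib

/-!
With `A n j = w n j * p n j ^ ρ`, the substitution `r n = P n ^ (-ρ)`, `c j = PPP j ^ (-ρ)` turns
the system into a matrix-scaling problem: `diag r * A * diag c` must have the row and column sums
of `w`, a matrix with the same support as `A`.

Such a scaling exists when the columns are connected through shared rows of the support: it is
`exp` of a minimiser of the convex potential `∑ (A n j * exp (u n + v j) - w n j * (u n + v j))`,
whose sublevel sets are bounded once one `v j` is fixed, because along every link of the support
`u n + v j` stays bounded. The scaling is unique up to `(t⁻¹ • r, t • c)`: the quotient of two
scalings scales the scaled matrix to itself, and the columns where its column factor is maximal are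
closed under sharing a row. Conversely, if the columns split into two blocks sharing no row,
doubling the column factors of one block and halving the factors of its rows gives a second,
non-proportional scaling.
-/

open Finset

/-- Connectedness of the quantity matrix `q`. -/
def QConnected {N M : ℕ} (q : Fin N → Fin M → ℝ) : Prop :=
  ∀ J : Finset (Fin M), J.Nonempty → J ≠ Finset.univ →
    ∃ j ∈ J, ∃ l ∉ J, ∃ k, 0 < q k j ∧ 0 < q k l

/-- `(PPP, P)` solves the generalized expenditure-share system of order `ρ` with
expenditure-share weights `w` and normalized expenditure-share weights `wstar`. -/
def GMeanSol {N M : ℕ} (p : Fin N → Fin M → ℝ) (w wstar : Fin N → Fin M → ℝ) (ρ : ℝ)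
    (PPP : Fin M → ℝ) (P : Fin N → ℝ) : Prop :=
  (∀ j, PPP j = (∑ n, w n j * (p n j / P n) ^ ρ) ^ (1 / ρ)) ∧
  (∀ i, P i = (∑ m, wstar i m * (p i m / PPP m) ^ ρ) ^ (1 / ρ))

variable {κ ι : Type*}

def CutConnected [Fintype ι] (r : ι → ι → Prop) : Prop :=
  ∀ J : Finset ι, J.Nonempty → J ≠ univ → ∃ j ∈ J, ∃ l ∉ J, r j l

theorem CutConnected.induction_on [Fintype ι] {r : ι → ι → Prop} (hr : CutConnected r)
    {P : ι → Prop} {a : ι} (ha : P a) (hstep : ∀ x y, r x y → P x → P y) (b : ι) : P b := by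
  classical
  by_contra hb
  obtain ⟨x, hx, y, hy, hxy⟩ := hr (univ.filter P) ⟨a, by simpa⟩
    fun h => hb (by simpa using h.ge (mem_univ b))
  simp only [mem_filter, mem_univ, true_and] at hx hy
  exact hy (hstep x y hxy hx)

def ColumnsLinked (W : κ → ι → ℝ) (i l : ι) : Prop :=
  ∃ k, 0 < W k i ∧ 0 < W k l

theorem columnsLinked_congr {S W : κ → ι → ℝ} (h : ∀ k i, 0 < S k i ↔ 0 < W k i) :
    ColumnsLinked S = ColumnsLinked W := by
  ext i l
  simp only [ColumnsLinked, h]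

section Scaling

variable [Fintype κ] [Fintype ι]

def IsScaling (A W : κ → ι → ℝ) (r : κ → ℝ) (c : ι → ℝ) : Prop :=
  (∀ k, ∑ i, r k * A k i * c i = ∑ i, W k i) ∧ ∀ i, ∑ k, r k * A k i * c i = ∑ k, W k i

theorem IsScaling.one_le_mul_of_forall_le {S : κ → ι → ℝ} {α : κ → ℝ} {β : ι → ℝ}
    (hS : ∀ k i, 0 ≤ S k i) (hα : ∀ k, 0 < α k) (h : IsScaling S S α β) {t : ℝ}
    (ht : ∀ i, β i ≤ t) {k : κ} {i : ι} (hki : 0 < S k i) : 1 ≤ α k * t := by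
  have hsum : 0 < ∑ i, S k i := hki.trans_le (single_le_sum (fun i _ => hS k i) (mem_univ i))
  refine le_of_mul_le_mul_right ?_ hsum
  calc 1 * ∑ i, S k i = ∑ i, α k * S k i * β i := by rw [one_mul, h.1 k]
    _ ≤ ∑ i, α k * S k i * t := by
      gcongr with i
      · exact mul_nonneg (hα k).le (hS k i)
      · exact ht i
    _ = α k * t * ∑ i, S k i := by rw [mul_sum]; exact sum_congr rfl fun i _ => by ring

theorem IsScaling.eq_const_of_self [Nonempty ι] {S : κ → ι → ℝ} {α : κ → ℝ} {β : ι → ℝ}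
    (hS : ∀ k i, 0 ≤ S k i) (hrow : ∀ k, ∃ i, 0 < S k i)
    (hconn : CutConnected (ColumnsLinked S)) (hα : ∀ k, 0 < α k) (hβ : ∀ i, 0 < β i)
    (h : IsScaling S S α β) : ∃ t, 0 < t ∧ (∀ i, β i = t) ∧ ∀ k, α k = t⁻¹ := by
  obtain ⟨i₀, hi₀⟩ := Finite.exists_max β
  set t := β i₀
  have row_eq : ∀ k i, β i = t → 0 < S k i → α k * t = 1 := by
    intro k i hi hki
    have hle : ∀ k' ∈ univ, S k' i ≤ α k' * S k' i * β i := by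
      intro k' _
      rcases (hS k' i).eq_or_lt with h0 | hpos
      · simp [← h0]
      · rw [hi]
        nlinarith [mul_le_mul_of_nonneg_left (h.one_le_mul_of_forall_le hS hα hi₀ hpos) hpos.le]
    have e := (sum_eq_sum_iff_of_le hle).1 (h.2 i).symm k (mem_univ k)
    rw [hi] at e
    apply mul_right_cancel₀ hki.ne'
    linear_combination -e
  have col_eq : ∀ k l, α k * t = 1 → 0 < S k l → β l = t := by
    intro k l hk hkl
    have hle : ∀ l' ∈ univ, α k * S k l' * β l' ≤ S k l' := by
      intro l' _
      have hkS : S k l' * (α k * t) = S k l' := by rw [hk, mul_one]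
      nlinarith [mul_nonneg (hS k l') (mul_nonneg (hα k).le (sub_nonneg.2 (hi₀ l')))]
    have e := (sum_eq_sum_iff_of_le hle).1 (h.1 k) l (mem_univ l)
    apply mul_left_cancel₀ (mul_pos (hα k) hkl).ne'
    linear_combination e - S k l * hk
  have all_eq : ∀ i, β i = t := hconn.induction_on (P := fun i => β i = t) rfl
    fun x y ⟨k, hkx, hky⟩ hx => col_eq k y (row_eq k x hx hkx) hky
  refine ⟨t, hβ i₀, all_eq, fun k => ?_⟩
  obtain ⟨i, hi⟩ := hrow k
  exact eq_inv_of_mul_eq_one_left (row_eq k i (all_eq i) hi)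

variable {A W : κ → ι → ℝ}

theorem IsScaling.unique [Nonempty ι] (hA : ∀ k i, 0 ≤ A k i) (hAW : ∀ k i, 0 < A k i ↔ 0 < W k i)
    (hrow : ∀ k, ∃ i, 0 < W k i) (hconn : CutConnected (ColumnsLinked W))
    {r r' : κ → ℝ} {c c' : ι → ℝ} (hr : ∀ k, 0 < r k) (hc : ∀ i, 0 < c i)
    (hr' : ∀ k, 0 < r' k) (hc' : ∀ i, 0 < c' i) (h : IsScaling A W r c)
    (h' : IsScaling A W r' c') :
    ∃ t, 0 < t ∧ (∀ i, c' i = t * c i) ∧ ∀ k, r' k = t⁻¹ * r k := by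
  set S : κ → ι → ℝ := fun k i => r k * A k i * c i
  have hSW : ∀ k i, 0 < S k i ↔ 0 < W k i := fun k i => by
    simp only [S, mul_pos_iff_of_pos_left (hr k), mul_pos_iff_of_pos_right (hc i), hAW]
  have hterm : ∀ k i, r' k / r k * S k i * (c' i / c i) = r' k * A k i * c' i := fun k i => by
    simp only [S]
    field_simp [(hr k).ne', (hc i).ne']
  have hself : IsScaling S S (fun k => r' k / r k) (fun i => c' i / c i) :=
    ⟨fun k => by simp only [hterm, h'.1, h.1, S], fun i => by simp only [hterm, h'.2, h.2, S]⟩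
  obtain ⟨t, ht, hβ, hα⟩ := hself.eq_const_of_self
    (fun k i => mul_nonneg (mul_nonneg (hr k).le (hA k i)) (hc i).le)
    (fun k => (hrow k).imp fun i => (hSW k i).2) (columnsLinked_congr hSW ▸ hconn)
    (fun k => div_pos (hr' k) (hr k)) (fun i => div_pos (hc' i) (hc i))
  exact ⟨t, ht, fun i => (div_eq_iff (hc i).ne').1 (hβ i),
    fun k => (div_eq_iff (hr k).ne').1 (hα k)⟩

theorem IsScaling.exists_not_proportional (hA : ∀ k i, 0 ≤ A k i)
    (hAW : ∀ k i, 0 < A k i ↔ 0 < W k i) (hconn : ¬ CutConnected (ColumnsLinked W))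
    {r : κ → ℝ} {c : ι → ℝ} (hr : ∀ k, 0 < r k) (hc : ∀ i, 0 < c i) (h : IsScaling A W r c) :
    ∃ r' c', (∀ k, 0 < r' k) ∧ (∀ i, 0 < c' i) ∧ IsScaling A W r' c' ∧
      ∀ t, ¬ ∀ i, c' i = t * c i := by
  classical
  simp only [CutConnected, not_forall, not_exists, not_and] at hconn
  obtain ⟨J, ⟨j, hj⟩, hJ, hcut⟩ := hconn
  obtain ⟨l, hl⟩ : ∃ l, l ∉ J := by
    by_contra! hl
    exact hJ (eq_univ_iff_forall.2 hl)
  -- a row meeting `J` meets no column outside `J`, so `2⁻¹` and `2` cancel on the support of `A`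
  set r' : κ → ℝ := fun k => (if ∃ i ∈ J, 0 < W k i then 2⁻¹ else 1) * r k
  set c' : ι → ℝ := fun i => (if i ∈ J then 2 else 1) * c i
  have hterm : ∀ k i, r' k * A k i * c' i = r k * A k i * c i := by
    intro k i
    rcases (hA k i).eq_or_lt with h0 | hpos
    · simp [← h0]
    have hWki := (hAW k i).1 hpos
    by_cases hi : i ∈ J
    · simp only [r', c', if_pos (⟨i, hi, hWki⟩ : ∃ i ∈ J, 0 < W k i), if_pos hi]
      ring
    · have hk : ¬ ∃ i ∈ J, 0 < W k i := fun ⟨i', hi', hWki'⟩ => hcut i' hi' i hi ⟨k, hWki', hWki⟩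
      simp only [r', c', if_neg hk, if_neg hi]
      ring
  refine ⟨r', c', fun k => mul_pos (by split_ifs <;> norm_num) (hr k),
    fun i => mul_pos (by split_ifs <;> norm_num) (hc i),
    ⟨fun k => by simp only [hterm, h.1], fun i => by simp only [hterm, h.2]⟩, fun t ht => ?_⟩
  have htj := ht j
  have htl := ht l
  simp only [c', if_pos hj, if_neg hl, one_mul] at htj htl
  have h2 : 2 = t := mul_right_cancel₀ (hc j).ne' htj
  have h1 : 1 = t := mul_right_cancel₀ (hc l).ne' (by rw [one_mul]; exact htl)
  norm_num [← h1] at h2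

end Scaling

theorem exists_le_mul_exp_sub_mul {a w : ℝ} (ha : 0 ≤ a) (hw : 0 ≤ w) (hwa : 0 < w → 0 < a) :
    ∃ b, ∀ s, b ≤ a * Real.exp s - w * s := by
  rcases hw.eq_or_lt with rfl | hw
  · exact ⟨0, fun s => by simpa using mul_nonneg ha (Real.exp_pos s).le⟩
  have ha := hwa hw
  -- the tangent line of `a * exp` with slope `w`
  refine ⟨w - w * Real.log (w / a), fun s => ?_⟩
  have h := Real.add_one_le_exp (s - Real.log (w / a))
  rw [Real.exp_sub, Real.exp_log (div_pos hw ha)] at h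
  have : w * (s - Real.log (w / a) + 1) ≤ a * Real.exp s := by
    calc w * (s - Real.log (w / a) + 1) ≤ w * (Real.exp s / (w / a)) :=
          mul_le_mul_of_nonneg_left h hw.le
      _ = a * Real.exp s := by field_simp
  linarith

theorem exists_abs_le_of_mul_exp_sub_mul_le {a w : ℝ} (ha : 0 < a) (hw : 0 < w) (B : ℝ) :
    ∃ R, ∀ s, a * Real.exp s - w * s ≤ B → |s| ≤ R := by
  refine ⟨max (B / w) (1 + 2 * (w + |B|) / a), fun s hs => ?_⟩
  rcases le_or_gt s 0 with hs0 | hs0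
  · rw [abs_of_nonpos hs0]
    refine le_max_of_le_left ((le_div_iff₀ hw).2 ?_)
    nlinarith [mul_pos ha (Real.exp_pos s)]
  · rw [abs_of_pos hs0]
    refine le_max_of_le_right ?_
    have hq := mul_le_mul_of_nonneg_left (Real.quadratic_le_exp_of_nonneg hs0.le) ha.le
    have hB := le_abs_self B
    rw [← sub_le_iff_le_add', le_div_iff₀ ha]
    rcases le_or_gt s 1 with hs1 | hs1
    · nlinarith [abs_nonneg B]
    · -- `a s² / 2 ≤ |B| + w s ≤ (|B| + w) s` once `s > 1`
      nlinarith [mul_le_mul_of_nonneg_left hs1.le (abs_nonneg B)]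

theorem isBounded_of_forall_exists_abs_le {s : Set ((κ → ℝ) × (ι → ℝ))}
    (h₁ : ∀ k, ∃ R, ∀ z ∈ s, |z.1 k| ≤ R) (h₂ : ∀ i, ∃ R, ∀ z ∈ s, |z.2 i| ≤ R) :
    Bornology.IsBounded s := by
  rw [← Bornology.isBounded_image_fst_and_snd, ← Bornology.forall_isBounded_image_eval_iff,
    ← Bornology.forall_isBounded_image_eval_iff]
  refine ⟨fun k => ?_, fun i => ?_⟩
  · obtain ⟨R, hR⟩ := h₁ k
    exact isBounded_iff_forall_norm_le.2 ⟨R, by rintro _ ⟨_, ⟨z, hz, rfl⟩, rfl⟩; exact hR z hz⟩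
  · obtain ⟨R, hR⟩ := h₂ i
    exact isBounded_iff_forall_norm_le.2 ⟨R, by rintro _ ⟨_, ⟨z, hz, rfl⟩, rfl⟩; exact hR z hz⟩

section Potential

variable [Fintype κ] [Fintype ι] (A W : κ → ι → ℝ)

noncomputable def scalingPotential (z : (κ → ℝ) × (ι → ℝ)) : ℝ :=
  ∑ k, ∑ i, (A k i * Real.exp (z.1 k + z.2 i) - W k i * (z.1 k + z.2 i))

theorem continuous_scalingPotential : Continuous (scalingPotential A W) := by
  unfold scalingPotential
  fun_prop

theorem scalingPotential_shift (z : (κ → ℝ) × (ι → ℝ)) (a : ℝ) :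
    scalingPotential A W (z.1 + fun _ => a, z.2 - fun _ => a) = scalingPotential A W z := by
  simp only [scalingPotential, Pi.add_apply, Pi.sub_apply, add_add_sub_cancel]

theorem hasDerivAt_scalingPotential_line (z d : (κ → ℝ) × (ι → ℝ)) :
    HasDerivAt (fun t : ℝ => scalingPotential A W (z + t • d))
      (∑ k, ∑ i, (A k i * Real.exp (z.1 k + z.2 i) - W k i) * (d.1 k + d.2 i)) 0 := by
  simp only [scalingPotential, Prod.fst_add, Prod.snd_add, Prod.smul_fst, Prod.smul_snd,
    Pi.add_apply, Pi.smul_apply, smul_eq_mul]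
  refine HasDerivAt.fun_sum fun k _ => HasDerivAt.fun_sum fun i _ => ?_
  have hline : HasDerivAt (fun t => z.1 k + t * d.1 k + (z.2 i + t * d.2 i)) (d.1 k + d.2 i) 0 :=
    ((hasDerivAt_mul_const _).const_add _).add ((hasDerivAt_mul_const _).const_add _)
  convert (hline.exp.const_mul (A k i)).fun_sub (hline.const_mul (W k i)) using 1
  simp only [zero_mul, add_zero]
  ring

theorem isScaling_exp_of_forall_le {z : (κ → ℝ) × (ι → ℝ)}
    (hz : ∀ y, scalingPotential A W z ≤ scalingPotential A W y) :
    IsScaling A W (fun k => Real.exp (z.1 k)) (fun i => Real.exp (z.2 i)) := by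
  classical
  have hcrit : ∀ d : (κ → ℝ) × (ι → ℝ),
      ∑ k, ∑ i, (A k i * Real.exp (z.1 k + z.2 i) - W k i) * (d.1 k + d.2 i) = 0 := fun d =>
    IsLocalMin.hasDerivAt_eq_zero
      (Filter.Eventually.of_forall fun t => by simpa using hz (z + t • d))
      (hasDerivAt_scalingPotential_line A W z d)
  have hterm : ∀ k i,
      Real.exp (z.1 k) * A k i * Real.exp (z.2 i) = A k i * Real.exp (z.1 k + z.2 i) :=
    fun k i => by rw [Real.exp_add]; ring
  constructor
  · intro k
    have := hcrit (Pi.single k 1, 0)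
    simp only [Pi.single_apply, Pi.zero_apply, add_zero, mul_ite, mul_one, mul_zero,
      sum_ite_irrel, sum_sub_distrib, sum_const_zero, sum_ite_eq', mem_univ, ↓reduceIte,
      sub_eq_zero] at this
    simpa only [hterm] using this
  · intro i
    have := hcrit (0, Pi.single i 1)
    simp only [Pi.zero_apply, Pi.single_apply, zero_add, mul_ite, mul_one, mul_zero,
      sum_ite_eq', mem_univ, ↓reduceIte, sum_sub_distrib, sub_eq_zero] at this
    simpa only [hterm] using this

variable {A W}

theorem exists_abs_add_le_of_scalingPotential_le (hA : ∀ k i, 0 ≤ A k i) (hW : ∀ k i, 0 ≤ W k i)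
    (hAW : ∀ k i, 0 < A k i ↔ 0 < W k i) (B : ℝ) {k : κ} {i : ι} (hki : 0 < W k i) :
    ∃ R, ∀ z, scalingPotential A W z ≤ B → |z.1 k + z.2 i| ≤ R := by
  set g : (κ → ℝ) × (ι → ℝ) → κ → ι → ℝ :=
    fun z k i => A k i * Real.exp (z.1 k + z.2 i) - W k i * (z.1 k + z.2 i)
  choose b hb using fun k i => exists_le_mul_exp_sub_mul (hA k i) (hW k i) (hAW k i).2
  obtain ⟨R, hR⟩ :=
    exists_abs_le_of_mul_exp_sub_mul_le ((hAW k i).2 hki) hki (B - ∑ k, ∑ i, b k i + b k i)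
  refine ⟨R, fun z hz => hR _ ?_⟩
  have hsingle : g z k i - b k i ≤ ∑ k, ∑ i, (g z k i - b k i) := by
    rw [← Fintype.sum_prod_type']
    exact single_le_sum (f := fun x => g z x.1 x.2 - b x.1 x.2)
      (fun x _ => sub_nonneg.2 (hb _ _ _)) (mem_univ (k, i))
  simp only [sum_sub_distrib] at hsingle
  change g z k i ≤ _
  change ∑ k, ∑ i, g z k i ≤ B at hz
  linarith

theorem isBounded_scalingPotential_sublevel (hA : ∀ k i, 0 ≤ A k i) (hW : ∀ k i, 0 ≤ W k i)
    (hAW : ∀ k i, 0 < A k i ↔ 0 < W k i) (hrow : ∀ k, ∃ i, 0 < W k i)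
    (hconn : CutConnected (ColumnsLinked W)) (B : ℝ) (i₀ : ι) :
    Bornology.IsBounded {z | scalingPotential A W z ≤ B ∧ z.2 i₀ = 0} := by
  set C := {z | scalingPotential A W z ≤ B ∧ z.2 i₀ = 0}
  have hedge : ∀ k i, 0 < W k i → ∃ R, ∀ z ∈ C, |z.1 k + z.2 i| ≤ R := fun k i hki =>
    (exists_abs_add_le_of_scalingPotential_le hA hW hAW B hki).imp fun R hR z hz => hR z hz.1
  have hcol : ∀ i, ∃ R, ∀ z ∈ C, |z.2 i| ≤ R := hconn.induction_on
    (P := fun i => ∃ R, ∀ z ∈ C, |z.2 i| ≤ R) (a := i₀) ⟨0, fun z hz => by simp [hz.2]⟩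
    fun i l ⟨k, hki, hkl⟩ ⟨R, hR⟩ => by
      obtain ⟨R₁, hR₁⟩ := hedge k i hki
      obtain ⟨R₂, hR₂⟩ := hedge k l hkl
      refine ⟨R + R₁ + R₂, fun z hz => ?_⟩
      have := abs_add_three (z.2 i) (-(z.1 k + z.2 i)) (z.1 k + z.2 l)
      rw [abs_neg, show z.2 i + -(z.1 k + z.2 i) + (z.1 k + z.2 l) = z.2 l by ring] at this
      linarith [hR z hz, hR₁ z hz, hR₂ z hz]
  refine isBounded_of_forall_exists_abs_le (fun k => ?_) hcol
  obtain ⟨i, hki⟩ := hrow k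
  obtain ⟨R₁, hR₁⟩ := hedge k i hki
  obtain ⟨R₂, hR₂⟩ := hcol i
  refine ⟨R₁ + R₂, fun z hz => ?_⟩
  have := abs_sub (z.1 k + z.2 i) (z.2 i)
  rw [add_sub_cancel_right] at this
  linarith [hR₁ z hz, hR₂ z hz]

theorem exists_forall_scalingPotential_le [Nonempty ι] (hA : ∀ k i, 0 ≤ A k i)
    (hW : ∀ k i, 0 ≤ W k i) (hAW : ∀ k i, 0 < A k i ↔ 0 < W k i) (hrow : ∀ k, ∃ i, 0 < W k i)
    (hconn : CutConnected (ColumnsLinked W)) :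
    ∃ z, ∀ y, scalingPotential A W z ≤ scalingPotential A W y := by
  obtain ⟨i₀⟩ := ‹Nonempty ι›
  set C := {z | scalingPotential A W z ≤ scalingPotential A W 0 ∧ z.2 i₀ = 0}
  have hC : IsCompact C := Metric.isCompact_of_isClosed_isBounded
    ((isClosed_le (continuous_scalingPotential A W) continuous_const).inter
      (isClosed_eq (by fun_prop) continuous_const))
    (isBounded_scalingPotential_sublevel hA hW hAW hrow hconn _ i₀)
  obtain ⟨z, hzC, hzmin⟩ :=
    hC.exists_isMinOn ⟨0, le_rfl, rfl⟩ (continuous_scalingPotential A W).continuousOn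
  refine ⟨z, fun y => ?_⟩
  by_cases hy : scalingPotential A W y ≤ scalingPotential A W 0
  · -- shifting by `a = y.2 i₀` brings `y` into `C`
    rw [← scalingPotential_shift A W y (y.2 i₀)] at hy ⊢
    exact isMinOn_iff.1 hzmin _ ⟨hy, sub_self _⟩
  · exact hzC.1.trans (le_of_not_ge hy)

theorem exists_isScaling [Nonempty ι] (hA : ∀ k i, 0 ≤ A k i) (hW : ∀ k i, 0 ≤ W k i)
    (hAW : ∀ k i, 0 < A k i ↔ 0 < W k i) (hrow : ∀ k, ∃ i, 0 < W k i)
    (hconn : CutConnected (ColumnsLinked W)) :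
    ∃ r c, (∀ k, 0 < r k) ∧ (∀ i, 0 < c i) ∧ IsScaling A W r c := by
  obtain ⟨z, hz⟩ := exists_forall_scalingPotential_le hA hW hAW hrow hconn
  exact ⟨_, _, fun k => Real.exp_pos _, fun i => Real.exp_pos _, isScaling_exp_of_forall_le A W hz⟩

theorem exists_isScaling_and_unique_iff [Nonempty ι] (hA : ∀ k i, 0 ≤ A k i)
    (hW : ∀ k i, 0 ≤ W k i) (hAW : ∀ k i, 0 < A k i ↔ 0 < W k i) (hrow : ∀ k, ∃ i, 0 < W k i) :
    ((∃ r c, (∀ k, 0 < r k) ∧ (∀ i, 0 < c i) ∧ IsScaling A W r c) ∧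
      ∀ r c r' c', (∀ k, 0 < r k) → (∀ i, 0 < c i) → IsScaling A W r c →
        (∀ k, 0 < r' k) → (∀ i, 0 < c' i) → IsScaling A W r' c' →
        ∃ t, 0 < t ∧ (∀ i, c' i = t * c i) ∧ ∀ k, r' k = t⁻¹ * r k) ↔
      CutConnected (ColumnsLinked W) := by
  constructor
  · rintro ⟨⟨r, c, hr, hc, h⟩, huniq⟩
    by_contra hconn
    obtain ⟨r', c', hr', hc', h', hne⟩ := h.exists_not_proportional hA hAW hconn hr hc
    obtain ⟨t, -, ht, -⟩ := huniq r c r' c' hr hc h hr' hc' h'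
    exact hne t ht
  · intro hconn
    exact ⟨exists_isScaling hA hW hAW hrow hconn, fun r c r' c' hr hc h hr' hc' h' =>
      h.unique hA hAW hrow hconn hr hc hr' hc' h'⟩

end Potential

section RpowNeg

variable {ρ : ℝ}

theorem eq_rpow_one_div_iff (hρ : ρ ≠ 0) {a S : ℝ} (ha : 0 < a) (hS : 0 ≤ S) :
    a = S ^ (1 / ρ) ↔ a ^ (-ρ) * S = 1 := by
  rw [eq_comm, one_div, Real.rpow_inv_eq hS ha.le hρ, Real.rpow_neg ha.le,
    inv_mul_eq_one₀ (Real.rpow_pos_of_pos ha ρ).ne', eq_comm]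

theorem exists_rpow_neg_eq (hρ : ρ ≠ 0) {c : ℝ} (hc : 0 < c) : ∃ x, 0 < x ∧ x ^ (-ρ) = c :=
  ⟨c ^ (-ρ)⁻¹, Real.rpow_pos_of_pos hc _, by
    rw [← Real.rpow_mul hc.le, inv_mul_cancel₀ (neg_ne_zero.2 hρ), Real.rpow_one]⟩

theorem exists_pos_rpow_neg_eq_fun (hρ : ρ ≠ 0) {α : Type*} {c : α → ℝ} (hc : ∀ a, 0 < c a) :
    ∃ x : α → ℝ, (∀ a, 0 < x a) ∧ (fun a => x a ^ (-ρ)) = c := by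
  choose x hx using fun a => exists_rpow_neg_eq hρ (hc a)
  exact ⟨x, fun a => (hx a).1, funext fun a => (hx a).2⟩

theorem eq_mul_iff_rpow_neg_eq (hρ : ρ ≠ 0) {a b γ : ℝ} (ha : 0 < a) (hb : 0 < b) (hγ : 0 < γ) :
    b = γ * a ↔ b ^ (-ρ) = γ ^ (-ρ) * a ^ (-ρ) := by
  rw [← Real.mul_rpow hγ.le ha.le]
  exact ⟨congrArg (· ^ (-ρ)), fun h => Real.rpow_left_injOn (neg_ne_zero.2 hρ) hb.le
    (mul_pos hγ ha).le h⟩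

theorem proportional_iff_rpow_neg (hρ : ρ ≠ 0) {α β : Type*} {x x' : α → ℝ} {y y' : β → ℝ}
    (hx : ∀ a, 0 < x a) (hx' : ∀ a, 0 < x' a) (hy : ∀ b, 0 < y b) (hy' : ∀ b, 0 < y' b)
    {γ : ℝ} (hγ : 0 < γ) :
    ((∀ a, x' a = γ * x a) ∧ ∀ b, y' b = γ⁻¹ * y b) ↔
      (∀ a, x' a ^ (-ρ) = γ ^ (-ρ) * x a ^ (-ρ)) ∧
        ∀ b, y' b ^ (-ρ) = (γ ^ (-ρ))⁻¹ * y b ^ (-ρ) := by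
  refine and_congr (forall_congr' fun a => eq_mul_iff_rpow_neg_eq hρ (hx a) (hx' a) hγ)
    (forall_congr' fun b => ?_)
  rw [← Real.inv_rpow hγ.le]
  exact eq_mul_iff_rpow_neg_eq hρ (hy b) (hy' b) (inv_pos.2 hγ)

end RpowNeg

section ExpenditureShares

variable {N M : ℕ} {p q w wstar : Fin N → Fin M → ℝ} {ρ : ℝ}

theorem expenditure_pos (hp : ∀ n j, 0 < p n j) (hq0 : ∀ n j, 0 ≤ q n j)
    (hqcol : ∀ j, ∃ n, 0 < q n j) (j : Fin M) : 0 < ∑ n, p n j * q n j :=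
  let ⟨n, hn⟩ := hqcol j
  sum_pos' (fun n _ => mul_nonneg (hp n j).le (hq0 n j)) ⟨n, mem_univ n, mul_pos (hp n j) hn⟩

theorem share_nonneg (hp : ∀ n j, 0 ≤ p n j) (hq0 : ∀ n j, 0 ≤ q n j)
    (hw : ∀ n j, w n j = p n j * q n j / ∑ n', p n' j * q n' j) (n : Fin N) (j : Fin M) :
    0 ≤ w n j := by
  rw [hw]
  exact div_nonneg (mul_nonneg (hp n j) (hq0 n j))
    (sum_nonneg fun n' _ => mul_nonneg (hp n' j) (hq0 n' j))

theorem share_pos_iff (hp : ∀ n j, 0 < p n j) (hq0 : ∀ n j, 0 ≤ q n j)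
    (hqcol : ∀ j, ∃ n, 0 < q n j) (hw : ∀ n j, w n j = p n j * q n j / ∑ n', p n' j * q n' j)
    (n : Fin N) (j : Fin M) : 0 < w n j ↔ 0 < q n j := by
  rw [hw, div_pos_iff_of_pos_right (expenditure_pos hp hq0 hqcol j),
    mul_pos_iff_of_pos_left (hp n j)]

theorem sum_share_eq_one (hp : ∀ n j, 0 < p n j) (hq0 : ∀ n j, 0 ≤ q n j)
    (hqcol : ∀ j, ∃ n, 0 < q n j) (hw : ∀ n j, w n j = p n j * q n j / ∑ n', p n' j * q n' j)
    (j : Fin M) : ∑ n, w n j = 1 := by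
  simp only [hw, ← sum_div, div_self (expenditure_pos hp hq0 hqcol j).ne']

theorem gMeanSol_iff_isScaling (hρ : ρ ≠ 0) (hp : ∀ n j, 0 ≤ p n j) (hw0 : ∀ n j, 0 ≤ w n j)
    (hcol : ∀ j, ∑ n, w n j = 1) (hrow : ∀ n, 0 < ∑ m, w n m)
    (hwstar : ∀ n j, wstar n j = w n j / ∑ m, w n m) {PPP : Fin M → ℝ} {P : Fin N → ℝ}
    (hPPP : ∀ j, 0 < PPP j) (hP : ∀ n, 0 < P n) :
    GMeanSol p w wstar ρ PPP P ↔
      IsScaling (fun n j => w n j * p n j ^ ρ) w (fun n => P n ^ (-ρ)) (fun j => PPP j ^ (-ρ)) := by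
  have hdiv : ∀ n j {x : ℝ}, 0 < x → (p n j / x) ^ ρ = p n j ^ ρ * x ^ (-ρ) := fun n j x hx => by
    rw [Real.div_rpow (hp n j) hx.le, Real.rpow_neg hx.le, div_eq_mul_inv]
  rw [GMeanSol, IsScaling, and_comm]
  refine and_congr (forall_congr' fun n => ?_) (forall_congr' fun j => ?_)
  · have hsum : P n ^ (-ρ) * ∑ m, wstar n m * (p n m / PPP m) ^ ρ =
        (∑ m, P n ^ (-ρ) * (w n m * p n m ^ ρ) * PPP m ^ (-ρ)) / ∑ m, w n m := by
      rw [mul_sum, sum_div]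
      refine sum_congr rfl fun m _ => ?_
      rw [hwstar, hdiv n m (hPPP m)]
      ring
    rw [eq_rpow_one_div_iff hρ (hP n), hsum, div_eq_one_iff_eq (hrow n).ne']
    exact sum_nonneg fun m _ => mul_nonneg (by rw [hwstar]; exact div_nonneg (hw0 n m) (hrow n).le)
      (Real.rpow_nonneg (div_nonneg (hp n m) (hPPP m).le) ρ)
  · have hterm : ∀ n, PPP j ^ (-ρ) * (w n j * (p n j / P n) ^ ρ) =
        P n ^ (-ρ) * (w n j * p n j ^ ρ) * PPP j ^ (-ρ) := fun n => by
      rw [hdiv n j (hP n)]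
      ring
    rw [eq_rpow_one_div_iff hρ (hPPP j), hcol j, mul_sum]
    · simp only [hterm]
    · exact sum_nonneg fun n _ => mul_nonneg (hw0 n j)
        (Real.rpow_nonneg (div_nonneg (hp n j) (hP n).le) ρ)

theorem exists_gMeanSol_iff (hρ : ρ ≠ 0) (hp : ∀ n j, 0 ≤ p n j) (hw0 : ∀ n j, 0 ≤ w n j)
    (hcol : ∀ j, ∑ n, w n j = 1) (hrow : ∀ n, 0 < ∑ m, w n m)
    (hwstar : ∀ n j, wstar n j = w n j / ∑ m, w n m) :
    (∃ (PPP : Fin M → ℝ) (P : Fin N → ℝ),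
        (∀ j, 0 < PPP j) ∧ (∀ n, 0 < P n) ∧ GMeanSol p w wstar ρ PPP P) ↔
      ∃ r c, (∀ n, 0 < r n) ∧ (∀ j, 0 < c j) ∧ IsScaling (fun n j => w n j * p n j ^ ρ) w r c := by
  constructor
  · rintro ⟨PPP, P, hPPP, hP, h⟩
    exact ⟨_, _, fun n => Real.rpow_pos_of_pos (hP n) _, fun j => Real.rpow_pos_of_pos (hPPP j) _,
      (gMeanSol_iff_isScaling hρ hp hw0 hcol hrow hwstar hPPP hP).1 h⟩
  · rintro ⟨r, c, hr, hc, h⟩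
    obtain ⟨P, hP, rfl⟩ := exists_pos_rpow_neg_eq_fun hρ hr
    obtain ⟨PPP, hPPP, rfl⟩ := exists_pos_rpow_neg_eq_fun hρ hc
    exact ⟨PPP, P, hPPP, hP, (gMeanSol_iff_isScaling hρ hp hw0 hcol hrow hwstar hPPP hP).2 h⟩

theorem gMeanSol_unique_iff (hρ : ρ ≠ 0) (hp : ∀ n j, 0 ≤ p n j) (hw0 : ∀ n j, 0 ≤ w n j)
    (hcol : ∀ j, ∑ n, w n j = 1) (hrow : ∀ n, 0 < ∑ m, w n m)
    (hwstar : ∀ n j, wstar n j = w n j / ∑ m, w n m) :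
    (∀ (PPP PPP' : Fin M → ℝ) (P P' : Fin N → ℝ),
        (∀ j, 0 < PPP j) → (∀ n, 0 < P n) → GMeanSol p w wstar ρ PPP P →
        (∀ j, 0 < PPP' j) → (∀ n, 0 < P' n) → GMeanSol p w wstar ρ PPP' P' →
        ∃ γ : ℝ, 0 < γ ∧ (∀ j, PPP' j = γ * PPP j) ∧ (∀ n, P' n = γ⁻¹ * P n)) ↔
      ∀ r c r' c', (∀ n, 0 < r n) → (∀ j, 0 < c j) →
        IsScaling (fun n j => w n j * p n j ^ ρ) w r c →
        (∀ n, 0 < r' n) → (∀ j, 0 < c' j) → IsScaling (fun n j => w n j * p n j ^ ρ) w r' c' →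
        ∃ t, 0 < t ∧ (∀ j, c' j = t * c j) ∧ ∀ n, r' n = t⁻¹ * r n := by
  have hsol := fun {PPP : Fin M → ℝ} {P : Fin N → ℝ} =>
    gMeanSol_iff_isScaling (PPP := PPP) (P := P) hρ hp hw0 hcol hrow hwstar
  constructor
  · intro huniq r c r' c' hr hc h hr' hc' h'
    obtain ⟨P, hP, rfl⟩ := exists_pos_rpow_neg_eq_fun hρ hr
    obtain ⟨PPP, hPPP, rfl⟩ := exists_pos_rpow_neg_eq_fun hρ hc
    obtain ⟨P', hP', rfl⟩ := exists_pos_rpow_neg_eq_fun hρ hr'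
    obtain ⟨PPP', hPPP', rfl⟩ := exists_pos_rpow_neg_eq_fun hρ hc'
    obtain ⟨γ, hγ, hprop⟩ := huniq PPP PPP' P P' hPPP hP ((hsol hPPP hP).2 h) hPPP' hP'
      ((hsol hPPP' hP').2 h')
    exact ⟨γ ^ (-ρ), Real.rpow_pos_of_pos hγ _,
      (proportional_iff_rpow_neg hρ hPPP hPPP' hP hP' hγ).1 hprop⟩
  · intro huniq PPP PPP' P P' hPPP hP h hPPP' hP' h'
    obtain ⟨t, ht, hprop⟩ := huniq _ _ _ _ (fun n => Real.rpow_pos_of_pos (hP n) _)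
      (fun j => Real.rpow_pos_of_pos (hPPP j) _) ((hsol hPPP hP).1 h)
      (fun n => Real.rpow_pos_of_pos (hP' n) _) (fun j => Real.rpow_pos_of_pos (hPPP' j) _)
      ((hsol hPPP' hP').1 h')
    obtain ⟨γ, hγ, rfl⟩ := exists_rpow_neg_eq hρ ht
    exact ⟨γ, hγ, (proportional_iff_rpow_neg hρ hPPP hPPP' hP hP' hγ).2 hprop⟩

end ExpenditureShares

theorem stmt18_general {N M : ℕ} (hM : 0 < M)
    (p q : Fin N → Fin M → ℝ) (ρ : ℝ)
    (hp : ∀ i j, 0 < p i j)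
    (hq0 : ∀ i j, 0 ≤ q i j)
    (hqrow : ∀ i, ∃ j, 0 < q i j)
    (hqcol : ∀ j, ∃ i, 0 < q i j)
    (hρ : ρ ≠ 0)
    (w wstar : Fin N → Fin M → ℝ)
    (hw : ∀ i j, w i j = p i j * q i j / ∑ n, p n j * q n j)
    (hwstar : ∀ i j, wstar i j = w i j / ∑ m, w i m) :
    ((∃ (PPP : Fin M → ℝ) (P : Fin N → ℝ),
        (∀ j, 0 < PPP j) ∧ (∀ i, 0 < P i) ∧ GMeanSol p w wstar ρ PPP P) ∧
      (∀ (PPP PPP' : Fin M → ℝ) (P P' : Fin N → ℝ),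
        (∀ j, 0 < PPP j) → (∀ i, 0 < P i) → GMeanSol p w wstar ρ PPP P →
        (∀ j, 0 < PPP' j) → (∀ i, 0 < P' i) → GMeanSol p w wstar ρ PPP' P' →
        ∃ γ : ℝ, 0 < γ ∧ (∀ j, PPP' j = γ * PPP j) ∧ (∀ i, P' i = γ⁻¹ * P i)))
    ↔ QConnected q := by
  have : Nonempty (Fin M) := ⟨⟨0, hM⟩⟩
  have hp0 : ∀ n j, 0 ≤ p n j := fun n j => (hp n j).le
  have hw0 := share_nonneg hp0 hq0 hw
  have hsupp := share_pos_iff hp hq0 hqcol hw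
  have hcol := sum_share_eq_one hp hq0 hqcol hw
  have hrow : ∀ n, ∃ j, 0 < w n j := fun n => (hqrow n).imp fun j => (hsupp n j).2
  have hrowsum : ∀ n, 0 < ∑ m, w n m := fun n =>
    let ⟨m, hm⟩ := hrow n
    sum_pos' (fun m _ => hw0 n m) ⟨m, mem_univ m, hm⟩
  have hA : ∀ n j, 0 ≤ w n j * p n j ^ ρ := fun n j =>
    mul_nonneg (hw0 n j) (Real.rpow_nonneg (hp0 n j) ρ)
  have hAw : ∀ n j, 0 < w n j * p n j ^ ρ ↔ 0 < w n j := fun n j =>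
    mul_pos_iff_of_pos_right (Real.rpow_pos_of_pos (hp n j) ρ)
  rw [exists_gMeanSol_iff hρ hp0 hw0 hcol hrowsum hwstar,
    gMeanSol_unique_iff hρ hp0 hw0 hcol hrowsum hwstar,
    exists_isScaling_and_unique_iff hA hw0 hAw hrow, columnsLinked_congr hsupp]
  -- `QConnected q` unfolds to `CutConnected (ColumnsLinked q)`
  rfl

theorem stmt18 {N M : ℕ} (hN : 0 < N) (hM : 0 < M)
    (p q : Fin N → Fin M → ℝ) (ρ : ℝ)
    (hp : ∀ i j, 0 < p i j)
    (hq0 : ∀ i j, 0 ≤ q i j)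
    (hqrow : ∀ i, ∃ j, 0 < q i j)
    (hqcol : ∀ j, ∃ i, 0 < q i j)
    (hρ : ρ ≠ 0)
    (w wstar : Fin N → Fin M → ℝ)
    (hw : ∀ i j, w i j = p i j * q i j / ∑ n, p n j * q n j)
    (hwstar : ∀ i j, wstar i j = w i j / ∑ m, w i m) :
    ((∃ (PPP : Fin M → ℝ) (P : Fin N → ℝ),
        (∀ j, 0 < PPP j) ∧ (∀ i, 0 < P i) ∧ GMeanSol p w wstar ρ PPP P) ∧
      (∀ (PPP PPP' : Fin M → ℝ) (P P' : Fin N → ℝ),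
        (∀ j, 0 < PPP j) → (∀ i, 0 < P i) → GMeanSol p w wstar ρ PPP P →
        (∀ j, 0 < PPP' j) → (∀ i, 0 < P' i) → GMeanSol p w wstar ρ PPP' P' →
        ∃ γ : ℝ, 0 < γ ∧ (∀ j, PPP' j = γ * PPP j) ∧ (∀ i, P' i = γ⁻¹ * P i)))
    ↔ QConnected q :=
  stmt18_general hM p q ρ hp hq0 hqrow hqcol hρ w wstar hw hwstar
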